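/- Let P be a finite pure poset and τ an order ideal of P. Define c : P → ℤ by c(u) = −h(u) if u ∈ τ and c(u) = h_P − h(u) if u ∉ τ, and let ℓ : ℤ^P → ℤ be the linear functional ℓ(x) = Σ_{u ∈ P} c(u)·x_u. Then ℓ(δ(e)) = 1 for every edge e ∈ E ∖ E(τ). (Thus the generators δ(e), e ∈ E ∖ E(τ), of the maximal cone σ_τ of the normal fan of Δ(P) all lie on an affine hyperplane at integral distance one from the origin, reflecting the Gorenstein property.) -/

import Mathlib

/-!
Purity passes from `P` to `P̂`, whose maximal chains are those of `P` together with `0̂` and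
`1̂`. In a finite bounded pure poset all saturated chains from `0̂` to `x` have length `h(x)`, so
`h(v) = h(u) + 1` along every edge `u ⋖ v`. Extending `c` by `0` at `0̂` and `1̂` is the same
formula with `{0̂} ∪ τ` in place of `τ`, and turns `ℓ(δ(e))` into `c(t(e)) − c(s(e))`. Since
`{0̂} ∪ τ` is a lower set, an edge outside `E(τ)` has both ends in it or both outside it, and
either way `c(t(e)) − c(s(e)) = h(s(e)) − h(t(e)) = 1`.
-/

open scoped Classical

abbrev Phat (P : Type*) := WithBot (WithTop P)

def toHat {P : Type*} (u : P) : Phat P := ((u : WithTop P) : Phat P)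

def chiHat {P : Type*} [DecidableEq P] : Phat P → (P → ℤ) :=
  WithBot.recBotCoe 0 (WithTop.recTopCoe 0 (fun v => Pi.single v 1))

def deltaVec {P : Type*} [DecidableEq P] (e : Phat P × Phat P) : P → ℤ :=
  chiHat e.1 - chiHat e.2

def edgeSet (P : Type*) [PartialOrder P] : Set (Phat P × Phat P) :=
  {e | e.1 ⋖ e.2}

def memHat {P : Type*} (τ : Set P) (a : Phat P) : Prop :=
  a = ⊥ ∨ ∃ u ∈ τ, a = toHat u

def edgeCut {P : Type*} [PartialOrder P] (τ : Set P) : Set (Phat P × Phat P) :=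
  {e ∈ edgeSet P | memHat τ e.1 ∧ ¬ memHat τ e.2}

noncomputable def heightNat {P : Type*} [PartialOrder P] (a : Phat P) : ℕ :=
  (Order.height a).toNat

def IsPurePoset (P : Type*) [PartialOrder P] : Prop :=
  ∀ C₁ C₂ : Set P, IsMaxChain (· ≤ ·) C₁ → IsMaxChain (· ≤ ·) C₂ →
    C₁.ncard = C₂.ncard

lemma IsMaxChain.mem_of_isChain_insert {β : Type*} {r : β → β → Prop} {C : Set β} {b : β}
    (hC : IsMaxChain r C) (h : IsChain r (insert b C)) : b ∈ C :=
  (hC.2 h (Set.subset_insert b C)).symm ▸ Set.mem_insert b C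

section OrderEmbedding

variable {α β : Type*} [PartialOrder α] [PartialOrder β] (f : α ↪o β) {C : Set β}

lemma IsMaxChain.compl_range_subset (hf : ∀ y ∉ Set.range f, ∀ z, y ≤ z ∨ z ≤ y)
    (hC : IsMaxChain (· ≤ ·) C) : (Set.range f)ᶜ ⊆ C :=
  fun y hy => hC.mem_of_isChain_insert (hC.1.insert fun z _ _ => hf y hy z)

lemma IsMaxChain.preimage_orderEmbedding (hf : ∀ y ∉ Set.range f, ∀ z, y ≤ z ∨ z ≤ y)
    (hC : IsMaxChain (· ≤ ·) C) : IsMaxChain (· ≤ ·) (f ⁻¹' C) := by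
  refine ⟨hC.1.preimage _ _ f f.injective fun _ _ => f.le_iff_le.mp, fun t ht hsub => ?_⟩
  refine hsub.antisymm fun u hu => hC.mem_of_isChain_insert (hC.1.insert fun z hz hne => ?_)
  by_cases hz' : z ∈ Set.range f
  · obtain ⟨v, rfl⟩ := hz'
    exact (ht hu (hsub hz) fun h => hne (congrArg f h)).imp f.le_iff_le.mpr f.le_iff_le.mpr
  · exact (hf z hz' (f u)).symm

lemma IsPurePoset.of_orderEmbedding [Finite β] (hα : IsPurePoset α)
    (hf : ∀ y ∉ Set.range f, ∀ z, y ≤ z ∨ z ≤ y) : IsPurePoset β := by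
  have hcard : ∀ C : Set β, IsMaxChain (· ≤ ·) C →
      C.ncard = (f ⁻¹' C).ncard + (Set.range f)ᶜ.ncard := by
    intro C hC
    rw [← Set.ncard_inter_add_ncard_sdiff_eq_ncard C (Set.range f),
      ← Set.image_preimage_eq_inter_range, Set.ncard_image_of_injective _ f.injective,
      Set.sdiff_eq, Set.inter_eq_right.mpr (hC.compl_range_subset f hf)]
  intro C₁ C₂ h₁ h₂
  rw [hcard C₁ h₁, hcard C₂ h₂,
    hα _ _ (h₁.preimage_orderEmbedding f hf) (h₂.preimage_orderEmbedding f hf)]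

end OrderEmbedding

abbrev CovBySeries (α : Type*) [Preorder α] := RelSeries {(a, b) : α × α | a ⋖ b}

namespace CovBySeries

variable {α : Type*} [PartialOrder α]

def toLTSeries (s : CovBySeries α) : LTSeries α := s.ofLE fun _ h => CovBy.lt h

lemma isMaxChain_range [BoundedOrder α] (s : CovBySeries α) (h0 : s.head = ⊥) (h1 : s.last = ⊤) :
    IsMaxChain (· ≤ ·) (Set.range s) :=
  IsMaxChain.range_fin_of_covBy h0 h1 fun k => (s.step k).wcovBy

lemma ncard_range (s : CovBySeries α) : (Set.range s).ncard = s.length + 1 := by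
  have hinj : Function.Injective s := s.toLTSeries.strictMono.injective
  rw [Set.ncard_range_of_injective hinj, Nat.card_eq_fintype_card, Fintype.card_fin]

lemma length_eq_of_isPurePoset [BoundedOrder α] (hpure : IsPurePoset α) {s t : CovBySeries α}
    (hs0 : s.head = ⊥) (hs1 : s.last = ⊤) (ht0 : t.head = ⊥) (ht1 : t.last = ⊤) :
    s.length = t.length := by
  have := hpure _ _ (s.isMaxChain_range hs0 hs1) (t.isMaxChain_range ht0 ht1)
  rw [s.ncard_range, t.ncard_range] at this
  omega

section Graded

variable [BoundedOrder α] [Finite α]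

lemma exists_through (x : α) :
    ∃ s t : CovBySeries α, s.head = ⊥ ∧ s.last = x ∧ t.head = x ∧ t.last = ⊤ := by
  obtain ⟨T, i, hT, h0, h1⟩ :=
    LTSeries.exists_relSeries_covBy_and_head_eq_bot_and_last_eq_bot (RelSeries.singleton _ x)
  have hx : T (i 0) = x := congrFun hT 0
  exact ⟨T.take (i 0), T.drop (i 0), by simpa using h0, by simpa using hx, by simpa using hx,
    by simpa using h1⟩

lemma _root_.LTSeries.length_le_of_isPurePoset (hpure : IsPurePoset α) (p : LTSeries α)
    {t : CovBySeries α} (ht0 : t.head = ⊥) (ht1 : t.last = ⊤) : p.length ≤ t.length := by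
  obtain ⟨T, i, -, hT0, hT1⟩ := p.exists_relSeries_covBy_and_head_eq_bot_and_last_eq_bot
  have := Fintype.card_le_of_embedding i
  simp only [Fintype.card_fin] at this
  have := length_eq_of_isPurePoset hpure hT0 hT1 ht0 ht1
  omega

lemma height_last_eq_length (hpure : IsPurePoset α) (s : CovBySeries α) (hs : s.head = ⊥) :
    Order.height s.last = s.length := by
  refine le_antisymm (Order.height_le fun p hp => ?_)
    (Order.length_le_height_last (p := s.toLTSeries))
  -- continued by the same saturated chain `u` up to `⊤`, `p` is no longer than `s`
  obtain ⟨-, u, -, -, hu0, hu1⟩ := exists_through s.last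
  have := LTSeries.length_le_of_isPurePoset hpure (p.smash u.toLTSeries (hp.trans hu0.symm))
    (t := s.smash u hu0.symm) (by simpa using hs) (by simpa using hu1)
  change p.length + u.length ≤ s.length + u.length at this
  exact_mod_cast (by omega : p.length ≤ s.length)

end Graded

end CovBySeries

lemma Order.height_ne_top_of_finite {α : Type*} [Preorder α] [Finite α] (a : α) :
    Order.height a ≠ ⊤ := fun h => by
  have := Fintype.ofFinite α
  obtain ⟨p, -, hp⟩ := Order.height_eq_top_iff.mp h (Fintype.card α)
  exact p.length_lt_card.ne hp

theorem IsPurePoset.height_eq_height_add_one_of_covBy {α : Type*} [PartialOrder α]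
    [BoundedOrder α] [Finite α] (hpure : IsPurePoset α) {a b : α} (hab : a ⋖ b) :
    Order.height b = Order.height a + 1 := by
  obtain ⟨s, -, hs0, rfl, -⟩ := CovBySeries.exists_through a
  have hb := CovBySeries.height_last_eq_length hpure (s.snoc b hab) (by simpa using hs0)
  rw [RelSeries.last_snoc] at hb
  rw [hb, CovBySeries.height_last_eq_length hpure s hs0]
  simp

section Phat

variable {P : Type*}

def toHatEmbedding [PartialOrder P] : P ↪o Phat P :=
  WithTop.coeOrderHom.trans WithBot.coeOrderHom

lemma eq_bot_or_eq_top_or_exists_eq_toHat (a : Phat P) : a = ⊥ ∨ a = ⊤ ∨ ∃ v, a = toHat v := by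
  induction a using WithBot.recBotCoe with
  | bot => exact Or.inl rfl
  | coe y =>
    induction y using WithTop.recTopCoe with
    | top => exact Or.inr (Or.inl rfl)
    | coe v => exact Or.inr (Or.inr ⟨v, rfl⟩)

lemma IsPurePoset.phat [PartialOrder P] [Finite P] (hpure : IsPurePoset P) :
    IsPurePoset (Phat P) :=
  hpure.of_orderEmbedding toHatEmbedding <| by
    intro y hy z
    rcases eq_bot_or_eq_top_or_exists_eq_toHat y with rfl | rfl | ⟨v, rfl⟩
    · exact Or.inl bot_le
    · exact Or.inr le_top
    · exact absurd ⟨v, rfl⟩ hy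

lemma memHat_toHat {τ : Set P} {u : P} : memHat τ (toHat u) ↔ u ∈ τ := by
  simp [memHat, toHat]

lemma not_memHat_top {τ : Set P} : ¬ memHat τ (⊤ : Phat P) := by
  simp [memHat, toHat]

lemma IsLowerSet.memHat_of_le [PartialOrder P] {τ : Set P} (hτ : IsLowerSet τ) {a b : Phat P}
    (hab : a ≤ b) (hb : memHat τ b) : memHat τ a := by
  obtain rfl | ⟨u, hu, rfl⟩ := hb
  · exact Or.inl (le_bot_iff.mp hab)
  rcases eq_bot_or_eq_top_or_exists_eq_toHat a with rfl | rfl | ⟨v, rfl⟩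
  · exact Or.inl rfl
  · simp [toHat] at hab
  · exact Or.inr ⟨v, hτ (toHatEmbedding.le_iff_le.mp hab) hu, rfl⟩

lemma sum_mul_chiHat [Fintype P] [DecidableEq P] (F : Phat P → ℤ) (hbot : F ⊥ = 0)
    (htop : F ⊤ = 0) (w : Phat P) : ∑ u : P, F (toHat u) * chiHat w u = F w := by
  induction w using WithBot.recBotCoe with
  | bot =>
    change ∑ u, F (toHat u) * (0 : P → ℤ) u = F ⊥
    simp [hbot]
  | coe y =>
    induction y using WithTop.recTopCoe with
    | top =>
      change ∑ u, F (toHat u) * (0 : P → ℤ) u = F ⊤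
      simp [htop]
    | coe v =>
      change ∑ u, F (toHat u) * (Pi.single v 1 : P → ℤ) u = F (toHat v)
      simp [Pi.single_apply]

lemma sum_mul_deltaVec [Fintype P] [DecidableEq P] (F : Phat P → ℤ) (hbot : F ⊥ = 0)
    (htop : F ⊤ = 0) (e : Phat P × Phat P) :
    ∑ u : P, F (toHat u) * deltaVec e u = F e.1 - F e.2 := by
  simp only [deltaVec, Pi.sub_apply, mul_sub, Finset.sum_sub_distrib,
    sum_mul_chiHat F hbot htop]

end Phat

/-- Let `P` be a finite pure poset and `τ` an order ideal.  With
`c(u) = −h(u)` for `u ∈ τ` and `c(u) = h_P − h(u)` for `u ∉ τ`, the linear functional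
`ℓ(x) = ∑_u c(u)·x_u` takes the value `1` on `δ(e)` for every edge `e ∈ E ∖ E(τ)`:
the generators of the maximal cone `σ_τ` of the normal fan of `Δ(P)` lie on an affine
hyperplane at integral distance one from the origin (the Gorenstein property). -/
theorem gorenstein_functional_on_cone (P : Type*) [PartialOrder P] [Fintype P]
    [DecidableEq P] (hpure : IsPurePoset P) (τ : Set P) (hτ : IsLowerSet τ) :
    ∀ e ∈ edgeSet P, e ∉ edgeCut τ →
      ∑ u : P,
        (if u ∈ τ then -(heightNat (toHat u) : ℤ)
          else (heightNat (⊤ : Phat P) : ℤ) - heightNat (toHat u)) * deltaVec e u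
      = 1 := by
  rintro ⟨a, b⟩ (hab : a ⋖ b) hcut
  let F : Phat P → ℤ := fun w =>
    if memHat τ w then -(heightNat w : ℤ) else (heightNat (⊤ : Phat P) : ℤ) - heightNat w
  have hF : ∀ u : P, (if u ∈ τ then -(heightNat (toHat u) : ℤ)
      else (heightNat (⊤ : Phat P) : ℤ) - heightNat (toHat u)) = F (toHat u) := by
    simp [F, memHat_toHat]
  have hFbot : F ⊥ = 0 := by simp [F, memHat, heightNat]
  have hFtop : F ⊤ = 0 := by simp [F, not_memHat_top]
  have hheight : heightNat b = heightNat a + 1 := by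
    rw [heightNat, heightNat, hpure.phat.height_eq_height_add_one_of_covBy hab,
      ENat.toNat_add (Order.height_ne_top_of_finite a) ENat.one_ne_top]
    rfl
  have hmem : memHat τ a ↔ memHat τ b :=
    ⟨fun ha => by_contra fun hb => hcut ⟨hab, ha, hb⟩, hτ.memHat_of_le hab.le⟩
  simp only [hF, sum_mul_deltaVec F hFbot hFtop, F, hmem]
  split_ifs <;> omega
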